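/- arXiv:0708.4188 — 5 statements merged into one kernel-verified Lean document; each statement's English description precedes it below -/
import Mathlib

section
/- Let r, s ≥ 1 be integers and define b₀ := (r+2)(s+1)(s+r+1)(2rs+2s+1)(rs+s+2)(rs+s+6)/6 and b₁ := (r+1)s·( 2s²(s+1)r⁴ + s(2s³+12s²+23s+9)r³ + (8s⁴+39s³+75s²+46s+10)r² + (10s⁴+59s³+108s²+89s+26)r + 4s⁴+30s³+64s²+58s+12 ). Then b₀ ≤ b₁. -/
/-! After the shift `r = a + 1`, `s = b + 1`, every coefficient of `b₁ - b₀` as a polynomial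
in `a` and `b` is positive, so `b₁ - b₀ ≥ 0` whenever `a, b ≥ 0`. -/

section GiesekerPetri

variable {K : Type*}

def gpDelta0Coeff [Field K] (r s : K) : K :=
  (r+2)*(s+1)*(s+r+1)*(2*r*s+2*s+1)*(r*s+s+2)*(r*s+s+6)/6

def gpDelta1Coeff [CommRing K] (r s : K) : K :=
  (r+1)*s*(2*s^2*(s+1)*r^4 + s*(2*s^3+12*s^2+23*s+9)*r^3
      + (8*s^4+39*s^3+75*s^2+46*s+10)*r^2
      + (10*s^4+59*s^3+108*s^2+89*s+26)*r
      + 4*s^4+30*s^3+64*s^2+58*s+12)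

variable [Field K] [LinearOrder K] [IsStrictOrderedRing K]

theorem gpDelta1Coeff_sub_gpDelta0Coeff_add_one_nonneg {a b : K} (ha : 0 ≤ a) (hb : 0 ≤ b) :
    0 ≤ gpDelta1Coeff (a + 1) (b + 1) - gpDelta0Coeff (a + 1) (b + 1) := by
  unfold gpDelta0Coeff gpDelta1Coeff
  ring_nf
  positivity

theorem gpDelta0Coeff_le_gpDelta1Coeff {r s : K} (hr : 1 ≤ r) (hs : 1 ≤ s) :
    gpDelta0Coeff r s ≤ gpDelta1Coeff r s := by
  obtain ⟨a, ha, rfl⟩ : ∃ a : K, 0 ≤ a ∧ r = a + 1 := ⟨r - 1, sub_nonneg.2 hr, by ring⟩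
  obtain ⟨b, hb, rfl⟩ : ∃ b : K, 0 ≤ b ∧ s = b + 1 := ⟨s - 1, sub_nonneg.2 hs, by ring⟩
  exact sub_nonneg.1 (gpDelta1Coeff_sub_gpDelta0Coeff_add_one_nonneg ha hb)

end GiesekerPetri

/-- The δ₀-coefficient of the Gieseker–Petri divisor is at most the δ₁-coefficient:
`b₀ ≤ b₁` for all integers `r, s ≥ 1`. -/
theorem b0_le_b1 (r' s' : ℤ) (hr : 1 ≤ r') (hs : 1 ≤ s')
    (r s b₀ b₁ : ℚ) (hrq : r = (r' : ℚ)) (hsq : s = (s' : ℚ))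
    (hb₀ : b₀ = (r+2)*(s+1)*(s+r+1)*(2*r*s+2*s+1)*(r*s+s+2)*(r*s+s+6)/6)
    (hb₁ : b₁ = (r+1)*s*(2*s^2*(s+1)*r^4 + s*(2*s^3+12*s^2+23*s+9)*r^3
      + (8*s^4+39*s^3+75*s^2+46*s+10)*r^2
      + (10*s^4+59*s^3+108*s^2+89*s+26)*r
      + 4*s^4+30*s^3+64*s^2+58*s+12)) :
    b₀ ≤ b₁ := by
  subst hrq hsq hb₀ hb₁
  exact gpDelta0Coeff_le_gpDelta1Coeff (by exact_mod_cast hr) (by exact_mod_cast hs)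
end

section
/- Let k ∈ {3, 4, 5}, let g ≥ 2 be an integer, and let n be the least integer with 2n ≥ g + k + 2 (i.e. n = ⌈(g+k+2)/2⌉). Set δ := (n−1)(n−2)/2 − (n−k)(n−k−1)/2 − g. Then n(n+3)/2 − (n−k+1)(n−k)/2 − 3δ ≥ 0. -/
/-!
The quadratic terms cancel: the virtual dimension equals `3g + (k+3)(k-1) - 2(k-2)n`, which
decreases in `n` once `k ≥ 2`. Minimality of `n` gives `2n ≤ g + k + 3`, and at that bound the
value is `(5-k)g + k + 3`, which is nonnegative exactly when `k ≤ 5` (for `g ≥ 0`).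
-/

theorem segre_virtual_dim_expr_eq {K : Type*} [Field K] [CharZero K] (k g n : K) :
    n * (n + 3) / 2 - (n - k + 1) * (n - k) / 2 -
      3 * ((n - 1) * (n - 2) / 2 - (n - k) * (n - k - 1) / 2 - g) =
      3 * g + (k + 3) * (k - 1) - 2 * (k - 2) * n := by
  ring

theorem Int.two_mul_le_add_one_of_forall_le {a n : ℤ} (hn : ∀ m : ℤ, a ≤ 2 * m → n ≤ m) :
    2 * n ≤ a + 1 := by
  by_contra! h
  have := hn (n - 1) (by omega)
  omega

theorem segre_linear_form_nonneg {k g n : ℤ} (hk₂ : 2 ≤ k) (hk₅ : k ≤ 5) (hg : 0 ≤ g)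
    (hn : 2 * n ≤ g + k + 3) : 0 ≤ 3 * g + (k + 3) * (k - 1) - 2 * (k - 2) * n := by
  nlinarith [mul_nonneg (sub_nonneg.2 hk₂) (sub_nonneg.2 hn), mul_nonneg (sub_nonneg.2 hk₅) hg]

theorem segre_virtual_dim_general (k g n : ℤ) (hk : k = 3 ∨ k = 4 ∨ k = 5) (hg : 2 ≤ g)
    (hn2 : ∀ m : ℤ, g + k + 2 ≤ 2 * m → n ≤ m) :
    (0 : ℚ) ≤ (n : ℚ) * (n + 3) / 2 - ((n : ℚ) - k + 1) * ((n : ℚ) - k) / 2 -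
      3 * (((n : ℚ) - 1) * ((n : ℚ) - 2) / 2
        - ((n : ℚ) - k) * ((n : ℚ) - k - 1) / 2 - (g : ℚ)) := by
  have hn : 2 * n ≤ g + k + 2 + 1 := Int.two_mul_le_add_one_of_forall_le hn2
  rw [segre_virtual_dim_expr_eq]
  exact_mod_cast segre_linear_form_nonneg (by omega) (by omega) (by omega) (by omega)

/-- Segre's virtual dimension inequality: for `k ∈ {3,4,5}`, `g ≥ 2`, and `n` the
least integer with `2n ≥ g + k + 2`, setting
`δ = (n-1)(n-2)/2 - (n-k)(n-k-1)/2 - g`, one has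
`n(n+3)/2 - (n-k+1)(n-k)/2 - 3δ ≥ 0`. -/
theorem segre_virtual_dim (k g n : ℤ) (hk : k = 3 ∨ k = 4 ∨ k = 5) (hg : 2 ≤ g)
    (hn1 : g + k + 2 ≤ 2 * n) (hn2 : ∀ m : ℤ, g + k + 2 ≤ 2 * m → n ≤ m) :
    (0 : ℚ) ≤ (n : ℚ) * (n + 3) / 2 - ((n : ℚ) - k + 1) * ((n : ℚ) - k) / 2 -
      3 * (((n : ℚ) - 1) * ((n : ℚ) - 2) / 2
        - ((n : ℚ) - k) * ((n : ℚ) - k - 1) / 2 - (g : ℚ)) :=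
  segre_virtual_dim_general k g n hk hg hn2
end

section
/- Fix integers r ≥ 1, s ≥ 1. For a tuple (i₁, …, i_{r+1}) of non-negative integers with s + r + i_j − j ≥ 0 for all j, define F(i₁, …, i_{r+1}) := ( ∏_{1 ≤ l < j ≤ r+1} (i_l − i_j + j − l) ) / ( ∏_{j=1}^{r+1} (s + r + i_j − j)! ), a rational number. Then F(2, 1, 1, …, 1, 0) = ( r(r+2)s / (s+r+1) ) · F(1, 1, …, 1), where in the first argument the middle entries (positions 2 through r) are all 1. -/
/-!
With `a_l = i_l - l`, the numerator of `F i` is the Vandermonde product `∏_{l<j} (a_l - a_j)`.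
Replacing `(1,…,1)` by `(2,1,…,1,0)` changes only the factors that involve the first or the last
index: column `j` of the product is multiplied by `(j+1)/j` for `0 < j < r`, which telescopes
to `r`, and column `r` by `r + 2`. In the denominator only the first and last factorials change,
`(s+r)! ↦ (s+r+1)!` and `s! ↦ (s-1)!`, which multiplies it by `(s+r+1)/s`.
-/

open Finset Nat

theorem prod_filter_fst_lt_snd_eq_prod_range {M : Type*} [CommMonoid M] (n : ℕ)
    (f : ℕ → ℕ → M) :
    ∏ p ∈ univ.filter (fun p : Fin n × Fin n => p.1 < p.2), f p.1 p.2 =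
      ∏ j ∈ range n, ∏ l ∈ range j, f l j := by
  rw [prod_filter, Fintype.prod_prod_type, prod_comm,
    ← Fin.prod_univ_eq_prod_range (fun j => ∏ l ∈ range j, f l j)]
  refine prod_congr rfl fun j _ => ?_
  simp_rw [Fin.lt_def, ← mem_range (n := j.val)]
  rw [Fin.prod_univ_eq_prod_range (fun l => if l ∈ range j then f l j else 1), prod_ite_mem,
    inter_eq_right.mpr (range_subset_range.mpr j.isLt.le)]

theorem prod_range_sub_mul_factorial {n k : ℕ} (h : k ≤ n) :
    (∏ l ∈ range k, ((n : ℚ) - l)) * (n - k)! = n ! := by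
  rw [← factorial_mul_descFactorial h, descFactorial_eq_prod_range, cast_mul, cast_prod, mul_comm]
  congr 1
  refine prod_congr rfl fun l hl => ?_
  rw [cast_sub (by grind)]

namespace HarrisTu

def vandermondeColumn (ι : ℕ → ℕ) (j : ℕ) : ℚ := ∏ l ∈ range j, ((ι l : ℚ) - ι j + j - l)

def numerator (r : ℕ) (ι : ℕ → ℕ) : ℚ := ∏ j ∈ range (r + 1), vandermondeColumn ι j

def denominator (r s : ℕ) (ι : ℕ → ℕ) : ℚ := ∏ j ∈ range (r + 1), ((s + r + ι j - (j + 1))! : ℚ)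

/-- The exponent tuple `(2, 1, …, 1, 0)` of `x₁² x₂ ⋯ x_r`, indexed from `0`. -/
def x1sqIndex (r : ℕ) (l : ℕ) : ℕ := if l = 0 then 2 else if l = r then 0 else 1

theorem vandermondeColumn_const (a j : ℕ) : vandermondeColumn (fun _ => a) j = j ! := by
  simpa [vandermondeColumn] using prod_range_sub_mul_factorial (le_refl j)

theorem x1sqIndex_of_pos_of_lt {r l : ℕ} (h0 : 0 < l) (hl : l < r) : x1sqIndex r l = 1 := by
  simp [x1sqIndex, h0.ne', hl.ne]

theorem vandermondeColumn_x1sqIndex_of_lt {r m : ℕ} (hm : m + 1 < r) :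
    vandermondeColumn (x1sqIndex r) (m + 1) = (m + 2) * m ! := by
  rw [vandermondeColumn, prod_range_succ', mul_comm]
  congr 1
  · simp [x1sqIndex, hm.ne]; ring
  · calc ∏ l ∈ range m, ((x1sqIndex r (l + 1) : ℚ) - x1sqIndex r (m + 1) + ↑(m + 1) - ↑(l + 1))
        = ∏ l ∈ range m, ((m : ℚ) - l) := prod_congr rfl fun l hl => by
          rw [x1sqIndex_of_pos_of_lt l.succ_pos (by grind),
            x1sqIndex_of_pos_of_lt m.succ_pos hm]
          push_cast; ring
      _ = m ! := by simpa using prod_range_sub_mul_factorial (le_refl m)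

theorem vandermondeColumn_x1sqIndex_self (k : ℕ) :
    vandermondeColumn (x1sqIndex (k + 1)) (k + 1) = (k + 3) * (k + 1)! := by
  rw [vandermondeColumn, prod_range_succ', mul_comm]
  congr 1
  · simp [x1sqIndex]; ring
  · calc ∏ l ∈ range k, ((x1sqIndex (k + 1) (l + 1) : ℚ) - x1sqIndex (k + 1) (k + 1)
          + ↑(k + 1) - ↑(l + 1))
        = ∏ l ∈ range k, (((k + 1 : ℕ) : ℚ) - l) := prod_congr rfl fun l hl => by
          rw [x1sqIndex_of_pos_of_lt l.succ_pos (by grind)]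
          simp [x1sqIndex]; ring
      _ = (k + 1)! := by simpa using prod_range_sub_mul_factorial k.le_succ

theorem prod_range_vandermondeColumn_x1sqIndex {r m : ℕ} (hm : m < r) :
    ∏ j ∈ range (m + 1), vandermondeColumn (x1sqIndex r) j =
      (m + 1) * ∏ j ∈ range (m + 1), vandermondeColumn (fun _ => 1) j := by
  induction m with
  | zero => simp [vandermondeColumn]
  | succ m ih =>
    rw [prod_range_succ _ (m + 1), prod_range_succ _ (m + 1), ih (by omega),
      vandermondeColumn_x1sqIndex_of_lt hm, vandermondeColumn_const, factorial_succ]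
    push_cast; ring

theorem numerator_x1sqIndex {r : ℕ} (hr : 1 ≤ r) :
    numerator r (x1sqIndex r) = r * (r + 2) * numerator r (fun _ => 1) := by
  obtain ⟨k, rfl⟩ := Nat.exists_eq_add_of_le' hr
  rw [numerator, numerator, prod_range_succ _ (k + 1), prod_range_succ _ (k + 1),
    prod_range_vandermondeColumn_x1sqIndex k.lt_succ_self, vandermondeColumn_x1sqIndex_self,
    vandermondeColumn_const]
  push_cast; ring

theorem denominator_x1sqIndex {r s : ℕ} (hr : 1 ≤ r) (hs : 1 ≤ s) :
    s * denominator r s (x1sqIndex r) = (s + r + 1) * denominator r s (fun _ => 1) := by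
  obtain ⟨k, rfl⟩ := Nat.exists_eq_add_of_le' hr
  obtain ⟨t, rfl⟩ := Nat.exists_eq_add_of_le' hs
  have hmiddle : ∀ j ∈ range k, x1sqIndex (k + 1) (j + 1) = 1 := fun j hj =>
    x1sqIndex_of_pos_of_lt j.succ_pos (by grind)
  rw [denominator, denominator, prod_range_succ, prod_range_succ', prod_range_succ,
    prod_range_succ', prod_congr rfl fun j hj => by rw [hmiddle j hj]]
  have hfirst : x1sqIndex (k + 1) 0 = 2 := rfl
  have hlast : x1sqIndex (k + 1) (k + 1) = 0 := by simp [x1sqIndex]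
  rw [hfirst, hlast, show t + 1 + (k + 1) + 2 - (0 + 1) = t + k + 2 + 1 by omega,
    show t + 1 + (k + 1) + 0 - (k + 1 + 1) = t by omega,
    show t + 1 + (k + 1) + 1 - (0 + 1) = t + k + 2 by omega,
    show t + 1 + (k + 1) + 1 - (k + 1 + 1) = t + 1 by omega, factorial_succ (t + k + 2),
    factorial_succ t]
  push_cast; ring

end HarrisTu

open HarrisTu in
/-- Harris–Tu intersection number identity:
`F(2,1,…,1,0) = (r(r+2)s/(s+r+1)) · F(1,…,1)`, where
`F(i) = (∏_{l<j} (i_l - i_j + j - l)) / (∏_j (s+r+i_j-j)!)`. -/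
theorem harris_tu_x1sq (r s : ℕ) (hr : 1 ≤ r) (hs : 1 ≤ s)
    (F : (Fin (r + 1) → ℕ) → ℚ)
    (hF : ∀ i : Fin (r + 1) → ℕ,
      F i = (∏ p ∈ Finset.univ.filter (fun p : Fin (r + 1) × Fin (r + 1) => p.1 < p.2),
          ((i p.1 : ℚ) - (i p.2 : ℚ) + (p.2.val : ℚ) - (p.1.val : ℚ))) /
        ∏ j : Fin (r + 1), ((Nat.factorial (s + r + i j - (j.val + 1)) : ℚ))) :
    F (fun j => if j.val = 0 then 2 else if j.val = r then 0 else 1) =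
      ((r : ℚ) * (r + 2) * s / (s + r + 1)) * F (fun _ => 1) := by
  have hF_val (i : Fin (r + 1) → ℕ) (ι : ℕ → ℕ) (hi : ∀ j, i j = ι j) :
      F i = numerator r ι / denominator r s ι := by
    rw [hF, funext hi,
      prod_filter_fst_lt_snd_eq_prod_range (r + 1) fun l j => (ι l : ℚ) - ι j + j - l, denominator,
      ← Fin.prod_univ_eq_prod_range fun j => ((s + r + ι j - (j + 1))! : ℚ)]
    rfl
  calc F _ = numerator r (x1sqIndex r) / denominator r s (x1sqIndex r) :=
        hF_val _ _ fun _ => rfl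
    _ = r * (r + 2) * s / (s + r + 1) *
          (numerator r (fun _ => 1) / denominator r s fun _ => 1) := by
      have hD_ne (ι : ℕ → ℕ) : denominator r s ι ≠ 0 := by unfold denominator; positivity
      rw [numerator_x1sqIndex hr]
      field_simp [hD_ne]
      linear_combination (-numerator r fun _ => 1) * denominator_x1sqIndex hr hs
    _ = _ := by rw [hF_val _ (fun _ => 1) fun _ => rfl]
end

section
/- Fix integers r ≥ 1, s ≥ 1 and define F(i₁, …, i_{r+1}) := ( ∏_{1 ≤ l < j ≤ r+1} (i_l − i_j + j − l) ) / ( ∏_{j=1}^{r+1} (s + r + i_j − j)! ). Then F(1, 1, …, 1, 0) = (r+1)·s · F(1, 1, …, 1), where the first tuple has r ones followed by a zero. -/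
open Finset

/-! The two tuples differ only in their last entry. Splitting off the pairs `(l, r + 1)` and the
last factorial, the remaining factors agree, while the split-off numerator factors are
`∏ (r + 1 - l) = (r + 1) ∏ (r - l)` and the last factorials are `(s - 1)!` against `s!`. -/

theorem Fin.prod_filter_lt_castSucc {M : Type*} [CommMonoid M] (n : ℕ)
    (f : Fin (n + 1) × Fin (n + 1) → M) :
    ∏ p ∈ univ.filter (fun p : Fin (n + 1) × Fin (n + 1) => p.1 < p.2), f p =
      (∏ p ∈ univ.filter (fun p : Fin n × Fin n => p.1 < p.2), f (p.1.castSucc, p.2.castSucc)) *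
        ∏ l : Fin n, f (l.castSucc, Fin.last n) := by
  simp only [prod_filter, Fintype.prod_prod_type, Fin.prod_univ_castSucc, Fin.castSucc_lt_castSucc_iff,
    Fin.castSucc_lt_last, if_true, not_lt.2 (Fin.le_last _), if_false, prod_const_one, mul_one,
    prod_mul_distrib]

theorem prod_fin_natCast_add_one_sub {R : Type*} [CommRing R] (n : ℕ) :
    ∏ l : Fin n, ((n : R) + 1 - l) = (n + 1) * ∏ l : Fin n, ((n : R) - l) := by
  have h := (Fin.prod_univ_castSucc (fun l : Fin (n + 1) => (n : R) + 1 - l)).symm.trans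
    (Fin.prod_univ_succ (fun l : Fin (n + 1) => (n : R) + 1 - l))
  simp only [Fin.val_castSucc, Fin.val_last, Fin.val_succ, Fin.val_zero] at h
  push_cast at h
  simpa [add_sub_add_right_eq_sub, mul_comm] using h

theorem harris_tu_theta_general (r s : ℕ) (hs : 1 ≤ s)
    (F : (Fin (r + 1) → ℕ) → ℚ)
    (hF : ∀ i : Fin (r + 1) → ℕ,
      F i = (∏ p ∈ Finset.univ.filter (fun p : Fin (r + 1) × Fin (r + 1) => p.1 < p.2),
          ((i p.1 : ℚ) - (i p.2 : ℚ) + (p.2.val : ℚ) - (p.1.val : ℚ))) /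
        ∏ j : Fin (r + 1), ((Nat.factorial (s + r + i j - (j.val + 1)) : ℚ))) :
    F (fun j => if j.val = r then 0 else 1) = ((r : ℚ) + 1) * s * F (fun _ => 1) := by
  rw [hF, hF, Fin.prod_filter_lt_castSucc, Fin.prod_filter_lt_castSucc,
    Fin.prod_univ_castSucc, Fin.prod_univ_castSucc]
  simp only [Fin.val_castSucc, Fin.val_last, Fin.is_lt, Nat.ne_of_lt, if_true, if_false]
  have last_column : ∏ l : Fin r, (((1 : ℕ) : ℚ) - ((0 : ℕ) : ℚ) + r - l) =
      (r + 1) * ∏ l : Fin r, (((1 : ℕ) : ℚ) - ((1 : ℕ) : ℚ) + r - l) := by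
    simpa [add_comm] using prod_fin_natCast_add_one_sub (R := ℚ) r
  rw [last_column, show s + r + 0 - (r + 1) = s - 1 by omega, show s + r + 1 - (r + 1) = s by omega,
    ← Nat.mul_factorial_pred (by omega : s ≠ 0)]
  push_cast
  field_simp

/-- Harris–Tu intersection number identity:
`F(1,…,1,0) = (r+1)s · F(1,…,1)` (the tuple has `r` ones followed by a zero), where
`F(i) = (∏_{l<j} (i_l - i_j + j - l)) / (∏_j (s+r+i_j-j)!)`. -/
theorem harris_tu_theta (r s : ℕ) (hr : 1 ≤ r) (hs : 1 ≤ s)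
    (F : (Fin (r + 1) → ℕ) → ℚ)
    (hF : ∀ i : Fin (r + 1) → ℕ,
      F i = (∏ p ∈ Finset.univ.filter (fun p : Fin (r + 1) × Fin (r + 1) => p.1 < p.2),
          ((i p.1 : ℚ) - (i p.2 : ℚ) + (p.2.val : ℚ) - (p.1.val : ℚ))) /
        ∏ j : Fin (r + 1), ((Nat.factorial (s + r + i j - (j.val + 1)) : ℚ))) :
    F (fun j => if j.val = r then 0 else 1) = ((r : ℚ) + 1) * s * F (fun _ => 1) :=
  harris_tu_theta_general r s hs F hF
end

section
/- Fix integers r ≥ 2, s ≥ 1 and define F(i₁, …, i_{r+1}) := ( ∏_{1 ≤ l < j ≤ r+1} (i_l − i_j + j − l) ) / ( ∏_{j=1}^{r+1} (s + r + i_j − j)! ). Then F(1, …, 1, 0, 0, 0) = ( (r+1)r(r−1)s(s+1)(s+2) / 6 ) · F(1, 1, …, 1), where the first tuple consists of r−2 ones followed by three zeros. -/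
/-!
Passing from the tuple `(1, …, 1)` to `(1, …, 1, 0, …, 0)` with `m` ones and `k` zeros changes the
Vandermonde factor `j - l` of a pair `l < j` only when `l < m ≤ j`, where it becomes `j - l + 1`.
For fixed `l` these ratios telescope to `(m - l + k) / (m - l)`, and their product over `l < m` is
`C(m + k, m)`. In the denominator exactly the last `k` factorials drop by one step, losing the
factors `s, s + 1, …, s + k - 1`. For `k = 3` this gives the constant `C(r + 1, 3) s (s + 1) (s + 2)`.
-/

open Finset
open scoped Nat

def shiftedVandermonde {n : ℕ} (i : Fin n → ℕ) : ℚ :=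
  ∏ p ∈ univ.filter (fun p : Fin n × Fin n => p.1 < p.2),
    ((i p.1 : ℚ) - (i p.2 : ℚ) + (p.2.val : ℚ) - (p.1.val : ℚ))

def factorialProd {n : ℕ} (c : ℕ) (i : Fin n → ℕ) : ℚ :=
  ∏ j : Fin n, ((c + i j - (j.val + 1))! : ℚ)

def onesThenZeros (n m : ℕ) : Fin n → ℕ := fun j => if m ≤ j.val then 0 else 1

lemma prod_range_add_one_div_telescope {K : Type*} [Field K] [LinearOrder K]
    [IsStrictOrderedRing K] {x : K} (hx : 0 < x) (k : ℕ) :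
    ∏ j ∈ range k, ((x + j + 1) / (x + j)) = (x + k) / x := by
  induction k with
  | zero => simp [hx.ne']
  | succ k ih =>
    rw [prod_range_succ, ih]
    have : 0 < x + k := by positivity
    field_simp
    push_cast
    ring

lemma prod_range_sub_add_div_sub {K : Type*} [Field K] [CharZero K] (m k : ℕ) :
    ∏ a ∈ range m, (((m : K) - a + k) / ((m : K) - a)) = (m + k).choose m := by
  induction m with
  | zero => simp
  | succ m ih =>
    have hshift : ∀ a : ℕ, ((m + 1 : ℕ) : K) - ((a + 1 : ℕ) : K) = m - a := by
      intro a
      push_cast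
      ring
    have hpascal :
        ((m + 1 + k).choose (m + 1) : K) * (m + 1) = (m + k).choose m * (m + k + 1) := by
      rw [add_right_comm m 1 k]
      exact_mod_cast ((m + k).add_one_mul_choose_eq m).symm.trans (mul_comm _ _)
    rw [prod_range_succ']
    simp only [hshift, ih]
    have : (m : K) + 1 ≠ 0 := Nat.cast_add_one_ne_zero m
    field_simp
    push_cast
    linear_combination -hpascal

lemma cast_choose_add_three {K : Type*} [Field K] [CharZero K] (m : ℕ) :
    ((m + 3).choose m : K) = (m + 1) * (m + 2) * (m + 3) / 6 := by
  rw [Nat.cast_choose K (by omega), Nat.add_sub_cancel_left]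
  simp only [Nat.factorial_succ, Nat.factorial_zero]
  have : (m ! : K) ≠ 0 := Nat.cast_ne_zero.mpr m.factorial_ne_zero
  push_cast
  field_simp
  ring

lemma prod_fin_add_sq_ite_lt_le {M : Type*} [CommMonoid M] (m k : ℕ) (f : ℕ → ℕ → M) :
    ∏ p : Fin (m + k) × Fin (m + k), (if p.1.val < m ∧ m ≤ p.2.val then f p.1 p.2 else 1)
      = ∏ a ∈ range m, ∏ b ∈ range k, f a (m + b) := by
  have hlt : ∀ x : Fin m, ¬ m ≤ (x : ℕ) := fun x => not_le.mpr x.is_lt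
  rw [Fintype.prod_prod_type]
  simp only [Fin.prod_univ_add, Fin.val_castAdd, Fin.val_natAdd, Fin.is_lt, hlt, and_false,
    if_false, prod_const_one, one_mul, le_add_iff_nonneg_right, zero_le, and_true, if_true,
    add_lt_iff_neg_left, not_lt_zero, mul_one]
  rw [← Fin.prod_univ_eq_prod_range]
  refine Fintype.prod_congr _ _ fun a => ?_
  rw [← Fin.prod_univ_eq_prod_range (fun b => f a (m + b))]

lemma shiftedVandermonde_onesThenZeros {n m : ℕ} (hm : m ≤ n) :
    shiftedVandermonde (onesThenZeros n m)
      = n.choose m * shiftedVandermonde (fun _ : Fin n => 1) := by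
  obtain ⟨k, rfl⟩ := Nat.exists_eq_add_of_le hm
  set g : ℕ → ℕ → ℚ := fun a b => ((b : ℚ) - a + 1) / ((b : ℚ) - a)
  set ratio : Fin (m + k) × Fin (m + k) → ℚ := fun p =>
    if p.1.val < m ∧ m ≤ p.2.val then g p.1 p.2 else 1
  have hterm : ∀ p ∈ univ.filter (fun p : Fin (m + k) × Fin (m + k) => p.1 < p.2),
      ((onesThenZeros (m + k) m p.1 : ℚ) - onesThenZeros (m + k) m p.2 + p.2.val - p.1.val)
        = ratio p * ((1 : ℕ) - (1 : ℕ) + p.2.val - p.1.val : ℚ) := by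
    rintro ⟨a, b⟩ hab
    have hab : a.val < b.val := by simpa using hab
    by_cases hstraddle : a.val < m ∧ m ≤ b.val
    · have hne : (b : ℚ) - a ≠ 0 := sub_ne_zero.mpr (by exact_mod_cast hab.ne')
      simp only [onesThenZeros, ratio, g, if_pos hstraddle, if_neg (not_le.mpr hstraddle.1),
        if_pos hstraddle.2]
      field_simp
      push_cast
      ring
    · have hsame : onesThenZeros (m + k) m a = onesThenZeros (m + k) m b := by
        unfold onesThenZeros
        split_ifs <;> omega
      simp only [ratio, if_neg hstraddle, hsame]
      ring
  have hratio : ∏ p ∈ univ.filter (fun p : Fin (m + k) × Fin (m + k) => p.1 < p.2), ratio p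
      = (m + k).choose m := by
    rw [prod_filter_of_ne fun p _ hp => ?_, prod_fin_add_sq_ite_lt_le]
    · rw [← prod_range_sub_add_div_sub m k]
      refine prod_congr rfl fun a ha => ?_
      simp only [g, Nat.cast_add, add_sub_right_comm]
      exact prod_range_add_one_div_telescope (by simpa using mem_range.mp ha) k
    · by_contra hge
      exact hp (if_neg fun h => hge (Fin.lt_def.mpr (by omega)))
  unfold shiftedVandermonde
  rw [prod_congr rfl hterm, prod_mul_distrib, hratio]

lemma factorialProd_ones {n m c : ℕ} (hm : m ≤ n) (hc : n ≤ c) :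
    factorialProd c (fun _ : Fin n => 1)
      = (c - m).descFactorial (n - m) * factorialProd c (onesThenZeros n m) := by
  obtain ⟨k, rfl⟩ := Nat.exists_eq_add_of_le hm
  have hlt : ∀ x : Fin m, ¬ m ≤ (x : ℕ) := fun x => not_le.mpr x.is_lt
  have hfac : ∀ i : Fin k,
      ((c + 1 - (m + i + 1))! : ℚ) = ((c - m - i : ℕ) : ℚ) * (c + 0 - (m + i + 1))! := by
    intro i
    rw [show c + 1 - (m + i + 1) = c + 0 - (m + i + 1) + 1 by omega, Nat.factorial_succ,
      show c + 0 - (m + i + 1) + 1 = c - m - i by omega]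
    push_cast
    ring
  simp only [factorialProd, onesThenZeros, Fin.prod_univ_add, Fin.val_castAdd, Fin.val_natAdd, hlt,
    if_false, le_add_iff_nonneg_right, zero_le, if_true, hfac, prod_mul_distrib,
    Nat.descFactorial_eq_prod_range, Nat.add_sub_cancel_left]
  rw [← Fin.prod_univ_eq_prod_range]
  push_cast
  ring

lemma factorialProd_ne_zero {n : ℕ} (c : ℕ) (i : Fin n → ℕ) : factorialProd c i ≠ 0 :=
  prod_ne_zero_iff.mpr fun j _ => by positivity

/-- Harris–Tu intersection number identity for `r ≥ 2`:
`F(1,…,1,0,0,0) = ((r+1)r(r-1)s(s+1)(s+2)/6) · F(1,…,1)` (the tuple has `r-2` ones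
followed by three zeros), where
`F(i) = (∏_{l<j} (i_l - i_j + j - l)) / (∏_j (s+r+i_j-j)!)`. -/
theorem harris_tu_theta_cubed (r s : ℕ) (hr : 2 ≤ r) (hs : 1 ≤ s)
    (F : (Fin (r + 1) → ℕ) → ℚ)
    (hF : ∀ i : Fin (r + 1) → ℕ,
      F i = (∏ p ∈ Finset.univ.filter (fun p : Fin (r + 1) × Fin (r + 1) => p.1 < p.2),
          ((i p.1 : ℚ) - (i p.2 : ℚ) + (p.2.val : ℚ) - (p.1.val : ℚ))) /
        ∏ j : Fin (r + 1), ((Nat.factorial (s + r + i j - (j.val + 1)) : ℚ))) :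
    F (fun j => if r - 2 ≤ j.val then 0 else 1) =
      (((r : ℚ) + 1) * r * (r - 1) * s * (s + 1) * (s + 2) / 6) * F (fun _ => 1) := by
  have hF' : ∀ i, F i = shiftedVandermonde i / factorialProd (s + r) i := hF
  have hchoose : ((r + 1).choose (r - 2) : ℚ) = (r + 1) * r * (r - 1) / 6 := by
    obtain ⟨m, rfl⟩ : ∃ m, r = m + 2 := ⟨r - 2, by omega⟩
    rw [Nat.add_sub_cancel, show m + 2 + 1 = m + 3 from rfl, cast_choose_add_three]
    push_cast
    ring
  have hdesc : ((s + r - (r - 2)).descFactorial (r + 1 - (r - 2)) : ℚ)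
      = s * (s + 1) * (s + 2) := by
    rw [show s + r - (r - 2) = s + 2 by omega, show r + 1 - (r - 2) = 3 by omega]
    simp only [Nat.descFactorial_succ, Nat.descFactorial_zero]
    push_cast
    ring
  change F (onesThenZeros (r + 1) (r - 2)) = _
  rw [hF', hF', shiftedVandermonde_onesThenZeros (by omega),
    factorialProd_ones (m := r - 2) (by omega) (by omega), hchoose, hdesc]
  have := factorialProd_ne_zero (s + r) (onesThenZeros (r + 1) (r - 2))
  field_simp
end
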